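/- arXiv:1805.03659 — 2 statements merged into one kernel-verified Lean document; each statement's English description precedes it below -/
import Mathlib

section
/- The number of Dyck paths of length 2N with maximal height at most h equals Σ_{k∈ℤ} [ C(2N, N − k(h+2)) − C(2N, N + 1 − k(h+2)) ], equivalently the total Catalan number C_N minus Σ_{k≥1} [ C(2N, N − k(h+2) − 1) − 2·C(2N, N − k(h+2)) + C(2N, N − k(h+2) + 1) ] has the stated reflection-principle form. -/
def stepVal (b : Bool) : ℤ := if b then 1 else -1

def pathHeight {n : ℕ} (s : Fin n → Bool) (k : ℕ) : ℤ :=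
  ∑ i : Fin n, if (i : ℕ) < k then stepVal (s i) else 0

def IsBoundedDyck (n h : ℕ) (s : Fin (2 * n) → Bool) : Prop :=
  pathHeight s (2 * n) = 0 ∧ ∀ k ≤ 2 * n, 0 ≤ pathHeight s k ∧ pathHeight s k ≤ (h : ℤ)

/-- The number of Dyck paths of length `2n` with maximal height at most `h`. -/
noncomputable def dyckCount (n h : ℕ) : ℕ :=
  Nat.card {s : Fin (2 * n) → Bool // IsBoundedDyck n h s}

/-- Binomial coefficient `C(n,k)` for an integer `k`, zero outside `0 ≤ k ≤ n`. -/
def chooseZ (n : ℕ) (k : ℤ) : ℤ :=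
  if 0 ≤ k ∧ k ≤ (n : ℤ) then (n.choose k.toNat : ℤ) else 0

/-
Let `P n j` be the number of paths of length `n` from `0` to `j` inside the strip `[0, h]`.
Removing the last step gives `P (n + 1) j = P n (j - 1) + P n (j + 1)` for `0 ≤ j ≤ h`, while
`P n (-1) = P n (h + 1) = 0`. The alternating sum of free walk counts over the orbit of `j` under
the reflections in `-1` and `h + 1` satisfies the same recursion term by term, vanishes at `-1`
(the terms cancel) and at `h + 1` (the sum telescopes), and has the same initial values, so the
two agree. At `n = 2N`, `j = 0` the free walk counts are binomial coefficients `C(2N, N + a)`.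
-/

open Finset

lemma chooseZ_of_neg (n : ℕ) {k : ℤ} (hk : k < 0) : chooseZ n k = 0 := by
  simp [chooseZ, not_le.mpr hk]

lemma chooseZ_of_nonneg (n : ℕ) {k : ℤ} (hk : 0 ≤ k) : chooseZ n k = n.choose k.toNat := by
  unfold chooseZ
  split_ifs
  · rfl
  · rw [Nat.choose_eq_zero_of_lt (by omega), Nat.cast_zero]

lemma chooseZ_of_lt (n : ℕ) {k : ℤ} (hk : (n : ℤ) < k) : chooseZ n k = 0 := by
  rw [chooseZ_of_nonneg n (by omega), Nat.choose_eq_zero_of_lt (by omega), Nat.cast_zero]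

lemma chooseZ_succ (n : ℕ) (k : ℤ) :
    chooseZ (n + 1) k = chooseZ n (k - 1) + chooseZ n k := by
  rcases lt_trichotomy k 0 with hk | rfl | hk
  · simp [chooseZ_of_neg _ hk, chooseZ_of_neg _ (show k - 1 < 0 by omega)]
  · rw [chooseZ_of_nonneg _ le_rfl, chooseZ_of_nonneg _ le_rfl, chooseZ_of_neg _ (by norm_num)]
    simp
  · rw [chooseZ_of_nonneg _ hk.le, chooseZ_of_nonneg _ hk.le, chooseZ_of_nonneg _ (by omega),
      show k.toNat = (k - 1).toNat + 1 by omega, Nat.choose_succ_succ', Nat.cast_add]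

lemma chooseZ_symm (n : ℕ) (k : ℤ) : chooseZ n ((n : ℤ) - k) = chooseZ n k := by
  rcases lt_or_ge k 0 with hk | hk
  · rw [chooseZ_of_neg _ hk, chooseZ_of_lt _ (by omega)]
  rcases lt_or_ge (n : ℤ) k with hn | hn
  · rw [chooseZ_of_lt _ hn, chooseZ_of_neg _ (by omega)]
  rw [chooseZ_of_nonneg _ hk, chooseZ_of_nonneg _ (by omega),
    show ((n : ℤ) - k).toNat = n - k.toNat by omega, Nat.choose_symm (by omega)]

/-- The number of `±1` walks of length `n` from `0` to `m`. -/
def walkCount (n : ℕ) (m : ℤ) : ℤ :=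
  if 2 ∣ (n : ℤ) + m then chooseZ n (((n : ℤ) + m) / 2) else 0

lemma walkCount_zero (m : ℤ) : walkCount 0 m = if m = 0 then 1 else 0 := by
  unfold walkCount
  by_cases hm : m = 0
  · simp [hm, chooseZ_of_nonneg]
  rw [if_neg hm]
  split_ifs
  · rcases lt_or_gt_of_ne hm with hm | hm
    · exact chooseZ_of_neg _ (by omega)
    · exact chooseZ_of_lt _ (by omega)
  · rfl

lemma walkCount_succ (n : ℕ) (m : ℤ) :
    walkCount (n + 1) m = walkCount n (m - 1) + walkCount n (m + 1) := by
  unfold walkCount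
  push_cast
  by_cases hm : 2 ∣ (n : ℤ) + 1 + m
  · rw [if_pos hm, if_pos (by omega), if_pos (by omega), chooseZ_succ,
      show ((n : ℤ) + (m - 1)) / 2 = ((n : ℤ) + 1 + m) / 2 - 1 by omega,
      show ((n : ℤ) + (m + 1)) / 2 = ((n : ℤ) + 1 + m) / 2 by omega]
  · rw [if_neg hm, if_neg (by omega), if_neg (by omega), add_zero]

lemma walkCount_neg (n : ℕ) (m : ℤ) : walkCount n (-m) = walkCount n m := by
  unfold walkCount
  by_cases hm : 2 ∣ (n : ℤ) + m
  · rw [if_pos hm, if_pos (by omega), show ((n : ℤ) + -m) / 2 = n - ((n : ℤ) + m) / 2 by omega,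
      chooseZ_symm]
  · rw [if_neg hm, if_neg (by omega)]

lemma walkCount_of_lt_abs {n : ℕ} {m : ℤ} (hm : (n : ℤ) < |m|) : walkCount n m = 0 := by
  unfold walkCount
  split_ifs
  · rcases abs_cases m with ⟨hm', -⟩ | ⟨hm', -⟩
    · exact chooseZ_of_lt _ (by omega)
    · exact chooseZ_of_neg _ (by omega)
  · rfl

lemma walkCount_two_mul (N : ℕ) (a : ℤ) :
    walkCount (2 * N) (2 * a) = chooseZ (2 * N) (N + a) := by
  unfold walkCount
  push_cast
  rw [if_pos ⟨N + a, by ring⟩, show (2 * (N : ℤ) + 2 * a) / 2 = N + a by omega]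

lemma Int.sum_Icc_sub_sub_one {G : Type*} [AddCommGroup G] (f : ℤ → G) {a b : ℤ}
    (hab : a - 1 ≤ b) : ∑ k ∈ Icc a b, (f k - f (k - 1)) = f b - f (a - 1) := by
  induction b, hab using Int.leInduction with
  | base => simp
  | succ b hab ih =>
    rw [← insert_Icc_right_eq_Icc_add_one (by omega), sum_insert (by simp), ih,
      add_sub_cancel_right]
    abel

section reflectionSum

/-- The alternating sum of free walk counts to the images `j + 2k(h+2)` and `-2 - j + 2k(h+2)` of
`j` under the reflections in `-1` and `h + 1`, truncated to `|k| ≤ M`. -/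
noncomputable def reflectionSum (h M n : ℕ) (j : ℤ) : ℤ :=
  ∑ k ∈ Icc (-(M : ℤ)) M,
    (walkCount n (j + 2 * k * (h + 2)) - walkCount n (-2 - j + 2 * k * (h + 2)))

variable (h M : ℕ)

lemma reflectionSum_succ (n : ℕ) (j : ℤ) :
    reflectionSum h M (n + 1) j = reflectionSum h M n (j - 1) + reflectionSum h M n (j + 1) := by
  simp only [reflectionSum, ← sum_add_distrib, walkCount_succ]
  refine sum_congr rfl fun k _ => ?_
  ring_nf

lemma reflectionSum_neg_one (n : ℕ) : reflectionSum h M n (-1) = 0 := by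
  simp only [reflectionSum, show (-2 : ℤ) - -1 = -1 by norm_num, sub_self, sum_const_zero]

lemma reflectionSum_zero {j : ℤ} (hj₀ : 0 ≤ j) (hjh : j ≤ h) :
    reflectionSum h M 0 j = if j = 0 then 1 else 0 := by
  rw [reflectionSum, sum_eq_single 0]
  · simp [walkCount_zero, show -2 - j ≠ 0 by omega]
  · intro k _ hk
    have hk' : 2 * (h + 2 : ℤ) ≤ 2 * k * (h + 2) ∨ 2 * k * (h + 2) ≤ -2 * (h + 2) := by
      rcases lt_or_gt_of_ne hk with hk | hk
      · right; nlinarith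
      · left; nlinarith
    rw [walkCount_zero, walkCount_zero, if_neg (by omega), if_neg (by omega), sub_zero]
  · simp

lemma reflectionSum_add_one {n : ℕ} (hn : n ≤ 2 * M) : reflectionSum h M n (h + 1) = 0 := by
  set f : ℤ → ℤ := fun k => walkCount n (h + 1 + 2 * k * (h + 2))
  have hf : ∀ k : ℤ, walkCount n (-2 - (h + 1) + 2 * k * (h + 2)) = f (k - 1) := fun k => by
    simp only [f]; ring_nf
  simp only [reflectionSum, hf]
  -- the mirror image of `h + 1` in `-1` is its translate by `-2(h + 2)`, so the sum telescopes
  rw [Int.sum_Icc_sub_sub_one f (by omega)]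
  have hM : 2 * (M : ℤ) ≤ 2 * M * (h + 2) := by nlinarith
  simp only [f]
  rw [walkCount_of_lt_abs (by rw [abs_of_pos (by omega)]; omega),
    walkCount_of_lt_abs (by rw [abs_of_neg (by nlinarith)]; nlinarith), sub_zero]

lemma reflectionSum_eq_zero {n : ℕ} (hn : n ≤ 2 * M) {j : ℤ} (hj : j = -1 ∨ j = h + 1) :
    reflectionSum h M n j = 0 := by
  obtain rfl | rfl := hj
  · exact reflectionSum_neg_one h M n
  · exact reflectionSum_add_one h M hn

end reflectionSum

section boundedPaths

lemma pathHeight_snoc {n : ℕ} (t : Fin n → Bool) (b : Bool) (k : ℕ) :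
    pathHeight (Fin.snoc t b : Fin (n + 1) → Bool) k =
      pathHeight t k + if n < k then stepVal b else 0 := by
  simp [pathHeight, Fin.sum_univ_castSucc]

lemma pathHeight_of_le {n : ℕ} (s : Fin n → Bool) {k : ℕ} (hk : n ≤ k) :
    pathHeight s k = pathHeight s n := by
  unfold pathHeight
  refine sum_congr rfl fun i _ => ?_
  rw [if_pos (by omega), if_pos i.isLt]

lemma pathHeight_fin_zero (s : Fin 0 → Bool) (k : ℕ) : pathHeight s k = 0 := by
  simp [pathHeight]

def boundedPaths (h n : ℕ) (j : ℤ) : Finset (Fin n → Bool) :=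
  {s | (∀ k ≤ n, 0 ≤ pathHeight s k ∧ pathHeight s k ≤ h) ∧ pathHeight s n = j}

variable {h : ℕ}

lemma boundedPaths_eq_empty {n : ℕ} {j : ℤ} (hj : ¬(0 ≤ j ∧ j ≤ h)) :
    boundedPaths h n j = ∅ := by
  refine eq_empty_of_forall_notMem fun s hs => hj ?_
  obtain ⟨hbound, rfl⟩ := (mem_filter.mp hs).2
  exact hbound n le_rfl

lemma card_boundedPaths_zero (j : ℤ) : #(boundedPaths h 0 j) = if j = 0 then 1 else 0 := by
  by_cases hj : j = 0 <;> simp [boundedPaths, pathHeight_fin_zero, hj, eq_comm]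

lemma snoc_mem_boundedPaths {n : ℕ} {j : ℤ} (t : Fin n → Bool) (b : Bool) :
    Fin.snoc t b ∈ boundedPaths h (n + 1) j ↔
      (0 ≤ j ∧ j ≤ h) ∧ t ∈ boundedPaths h n (j - stepVal b) := by
  have hinit : ∀ k ≤ n, pathHeight (Fin.snoc t b : Fin (n + 1) → Bool) k = pathHeight t k :=
    fun k hk => by simp [pathHeight_snoc, not_lt.mpr hk]
  have hlast :
      pathHeight (Fin.snoc t b : Fin (n + 1) → Bool) (n + 1) = pathHeight t n + stepVal b := by
    simp [pathHeight_snoc, pathHeight_of_le t n.le_succ]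
  simp only [boundedPaths, mem_filter, mem_univ, true_and, hlast]
  constructor
  · rintro ⟨hbound, hend⟩
    refine ⟨hend ▸ hlast ▸ hbound (n + 1) le_rfl, fun k hk => ?_, by omega⟩
    exact hinit k hk ▸ hbound k (by omega)
  · rintro ⟨hj, hbound, hend⟩
    refine ⟨fun k hk => ?_, by omega⟩
    rcases Nat.le_add_one_iff.mp hk with hk | rfl
    · exact hinit k hk ▸ hbound k hk
    · rw [hlast]; omega

lemma card_boundedPaths_succ {n : ℕ} {j : ℤ} (hj : 0 ≤ j ∧ j ≤ h) :
    #(boundedPaths h (n + 1) j) = #(boundedPaths h n (j - 1)) + #(boundedPaths h n (j + 1)) := by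
  have hsigma : #((univ : Finset Bool).sigma fun b => boundedPaths h n (j - stepVal b)) =
      #(boundedPaths h (n + 1) j) :=
    card_equiv ((Equiv.sigmaEquivProd _ _).trans (Fin.snocEquiv fun _ => Bool)) fun ⟨b, t⟩ => by
      simp only [mem_sigma, mem_univ, true_and]
      exact ((snoc_mem_boundedPaths t b).trans (and_iff_right hj)).symm
  rw [← hsigma, card_sigma, Fintype.sum_bool]
  simp [stepVal, add_comm]

end boundedPaths

lemma card_boundedPaths_eq_reflectionSum {h M n : ℕ} (hn : n ≤ 2 * M) {j : ℤ} (hj₁ : -1 ≤ j)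
    (hj₂ : j ≤ h + 1) : (#(boundedPaths h n j) : ℤ) = reflectionSum h M n j := by
  induction n generalizing j with
  | zero =>
    by_cases hj : 0 ≤ j ∧ j ≤ h
    · rw [card_boundedPaths_zero, reflectionSum_zero h M hj.1 hj.2]
      split_ifs <;> rfl
    · rw [boundedPaths_eq_empty hj, reflectionSum_eq_zero h M hn (by omega), card_empty,
        Nat.cast_zero]
  | succ n ih =>
    by_cases hj : 0 ≤ j ∧ j ≤ h
    · rw [card_boundedPaths_succ hj, reflectionSum_succ, Nat.cast_add,
        ih (by omega) (by omega) (by omega), ih (by omega) (by omega) (by omega)]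
    · rw [boundedPaths_eq_empty hj, reflectionSum_eq_zero h M hn (by omega), card_empty,
        Nat.cast_zero]

lemma dyckCount_eq_card_boundedPaths (N h : ℕ) :
    dyckCount N h = #(boundedPaths h (2 * N) 0) := by
  classical
  rw [dyckCount, Nat.card_eq_fintype_card]
  exact Fintype.card_of_subtype _ fun s => by simp [boundedPaths, IsBoundedDyck, and_comm]

/-- Reflection-principle count for Dyck paths confined to a strip of height `h`:
the count equals `Σ_{k∈ℤ} [C(2N, N - k(h+2)) - C(2N, N + 1 - k(h+2))]`
(all terms with `|k| > N` vanish). -/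
theorem stmt4 (N h : ℕ) :
    (dyckCount N h : ℤ) =
      ∑ k ∈ Finset.Icc (-(N : ℤ)) (N : ℤ),
        (chooseZ (2 * N) ((N : ℤ) - k * ((h : ℤ) + 2)) -
          chooseZ (2 * N) ((N : ℤ) + 1 - k * ((h : ℤ) + 2))) := by
  rw [dyckCount_eq_card_boundedPaths, card_boundedPaths_eq_reflectionSum (M := N) le_rfl
    (by omega) (by omega), reflectionSum]
  refine sum_congr rfl fun k _ => ?_
  rw [← walkCount_neg, ← walkCount_neg _ (-2 - 0 + _),
    show -(0 + 2 * k * (h + 2)) = 2 * -(k * (h + 2)) by ring,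
    show -(-2 - 0 + 2 * k * (h + 2)) = 2 * (1 - k * (h + 2)) by ring,
    walkCount_two_mul, walkCount_two_mul, ← sub_eq_add_neg, ← add_sub_assoc]
end

section
/- For all real x ∈ [0,1] and every positive integer M, one has 0 ≤ e^{−Mx²/2} − (1 − x²/2)^M ≤ e^{−Mx²/2} · ( (Mx⁴/4) / (1 − x²/2) ). -/
/-!
Put `a = x² / 2`. Since `1 - a ≤ e^{-a}`, we get `(1 - a)^M ≤ e^{-Ma}`. Conversely,
`log (1 - a) ≥ -a / (1 - a) = -a - a² / (1 - a)`, so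
`(1 - a)^M ≥ e^{-Ma} · e^{-M a² / (1 - a)} ≥ e^{-Ma} (1 - M a² / (1 - a))`,
which is the upper bound since `M a² / (1 - a) = (M x⁴ / 4) / (1 - x² / 2)`.
-/

namespace Real

lemma one_sub_pow_le_exp_neg_mul {a : ℝ} (ha : a ≤ 1) (n : ℕ) :
    (1 - a) ^ n ≤ exp (-(n * a)) := by
  rw [neg_mul_eq_mul_neg, exp_nat_mul]
  exact pow_le_pow_left₀ (by linarith) (one_sub_le_exp_neg a) n

lemma exp_neg_div_one_sub_le_one_sub {a : ℝ} (ha : a < 1) : exp (-(a / (1 - a))) ≤ 1 - a := by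
  have h : 0 < 1 - a := by linarith
  calc exp (-(a / (1 - a))) = exp (1 - (1 - a)⁻¹) := by
        congr 1
        field_simp
        ring
    _ ≤ exp (log (1 - a)) := exp_le_exp.mpr (one_sub_inv_le_log_of_pos h)
    _ = 1 - a := exp_log h

lemma exp_neg_mul_sub_one_sub_pow_le {a : ℝ} (ha : a < 1) (n : ℕ) :
    exp (-(n * a)) - (1 - a) ^ n ≤ exp (-(n * a)) * (n * a ^ 2 / (1 - a)) := by
  have h : 0 < 1 - a := by linarith
  have hlower : exp (-(n * a)) * exp (-(n * a ^ 2 / (1 - a))) ≤ (1 - a) ^ n := by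
    calc exp (-(n * a)) * exp (-(n * a ^ 2 / (1 - a))) = exp (-(a / (1 - a))) ^ n := by
          rw [← exp_add, ← exp_nat_mul]
          congr 1
          field_simp
          ring
      _ ≤ (1 - a) ^ n := pow_le_pow_left₀ (exp_pos _).le (exp_neg_div_one_sub_le_one_sub ha) n
  nlinarith [one_sub_le_exp_neg (n * a ^ 2 / (1 - a)), exp_pos (-(n * a))]

end Real

theorem stmt8_general (x : ℝ) (hx0 : 0 ≤ x) (hx1 : x ≤ 1) (M : ℕ) :
    0 ≤ Real.exp (-(M : ℝ) * x ^ 2 / 2) - (1 - x ^ 2 / 2) ^ M ∧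
    Real.exp (-(M : ℝ) * x ^ 2 / 2) - (1 - x ^ 2 / 2) ^ M ≤
      Real.exp (-(M : ℝ) * x ^ 2 / 2) * (((M : ℝ) * x ^ 4 / 4) / (1 - x ^ 2 / 2)) := by
  have hx2 : x ^ 2 / 2 < 1 := by nlinarith
  have hexp : -(M : ℝ) * x ^ 2 / 2 = -(M * (x ^ 2 / 2)) := by ring
  have hratio : (M : ℝ) * x ^ 4 / 4 = M * (x ^ 2 / 2) ^ 2 := by ring
  rw [hexp, hratio]
  exact ⟨sub_nonneg.mpr (Real.one_sub_pow_le_exp_neg_mul hx2.le M),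
    Real.exp_neg_mul_sub_one_sub_pow_le hx2 M⟩

/-- Quantitative estimate showing that `(1 - x²/2)^M` is well approximated by
the Gaussian `exp (-M x² / 2)` for `x ∈ [0,1]`. -/
theorem stmt8 (x : ℝ) (hx0 : 0 ≤ x) (hx1 : x ≤ 1) (M : ℕ) (hM : 1 ≤ M) :
    0 ≤ Real.exp (-(M : ℝ) * x ^ 2 / 2) - (1 - x ^ 2 / 2) ^ M ∧
    Real.exp (-(M : ℝ) * x ^ 2 / 2) - (1 - x ^ 2 / 2) ^ M ≤
      Real.exp (-(M : ℝ) * x ^ 2 / 2) * (((M : ℝ) * x ^ 4 / 4) / (1 - x ^ 2 / 2)) :=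
  stmt8_general x hx0 hx1 M
end
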